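/- arXiv:2405.15016 — 4 statements merged into one kernel-verified Lean document; each statement's English description precedes it below -/
import Mathlib

section
/- Let N ≥ 2, and for each pair n,k ∈ {1,...,N} let κ_{nk} be bounded functions on a measure space satisfying: |κ_{nn}| = a on the complement of σ_n and |κ_{nn}| = 1 on σ_n; and for n ≠ k, |κ_{nk}| = b off σ_k and |κ_{nk}| = 1 on σ_k, where σ₁,...,σ_N are pairwise disjoint sets whose union has full measure and a, b > 0. Then for almost every point ζ, every permutation {n_j} of {1,...,N} with n_j ≠ j for at least one j satisfies |∏_{j=1}^N κ_{n_j j}(ζ)| ≤ b, and hence |det[κ_{nk}(ζ)]| ≥ a^{N-1}·(value of diagonal product modulus)/a^{N-1} − N!·b ≥ a^{N-1} − N!·b whenever the diagonal product has modulus a^{N-1} a.e. -/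
/-!
On `σ k` every entry of `κ` has modulus at most `1`, and the off-diagonal entries outside
column `k` have modulus exactly `b`. A non-identity permutation moves at least two indices,
hence some `l ≠ k`, so its product contains the factor `κ (π l) l` of modulus `b` and has
modulus at most `b`. Since the `σ k` cover almost everything, this holds almost everywhere;
expanding the determinant then leaves the diagonal product plus fewer than `N!` terms of
modulus at most `b`.
-/

open MeasureTheory Set

open Equiv Finset

theorem Finset.norm_prod_le_of_norm_le_one {ι R : Type*} [DecidableEq ι] [NormedCommRing R]
    [NormOneClass R]
    {s : Finset ι} {x : ι → R} {l : ι} (hl : l ∈ s) {b : ℝ} (hxl : ‖x l‖ ≤ b)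
    (hx : ∀ i ∈ s, ‖x i‖ ≤ 1) : ‖∏ i ∈ s, x i‖ ≤ b := by
  have hrest : ‖∏ i ∈ s.erase l, x i‖ ≤ 1 :=
    (Finset.norm_prod_le _ _).trans
      (prod_le_one (fun _ _ ↦ norm_nonneg _) fun i hi ↦ hx i (mem_of_mem_erase hi))
  rw [← mul_prod_erase s x hl]
  calc ‖x l * ∏ i ∈ s.erase l, x i‖
      ≤ ‖x l‖ * ‖∏ i ∈ s.erase l, x i‖ := norm_mul_le _ _
    _ ≤ b * 1 := mul_le_mul hxl hrest (norm_nonneg _) ((norm_nonneg _).trans hxl)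
    _ = b := mul_one b

theorem Equiv.Perm.exists_ne_apply_ne_of_ne_one {α : Type*} [Fintype α] [DecidableEq α]
    {π : Perm α} (hπ : π ≠ 1) (k : α) : ∃ l, l ≠ k ∧ π l ≠ l := by
  obtain ⟨l, hl, hlk⟩ := exists_mem_ne (Perm.two_le_card_support_of_ne_one hπ) k
  exact ⟨l, hlk, Perm.mem_support.mp hl⟩

namespace Matrix

variable {ι R : Type*} [Fintype ι] [DecidableEq ι]

theorem norm_prod_perm_le_of_norm_offDiag_le [NormedCommRing R] [NormOneClass R]
    (M : Matrix ι ι R) (k : ι) {b : ℝ} (hM : ∀ i j, ‖M i j‖ ≤ 1)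
    (hoff : ∀ i j, i ≠ j → j ≠ k → ‖M i j‖ ≤ b) {π : Perm ι} (hπ : π ≠ 1) :
    ‖∏ j, M (π j) j‖ ≤ b := by
  obtain ⟨l, hlk, hπl⟩ := Perm.exists_ne_apply_ne_of_ne_one hπ k
  exact norm_prod_le_of_norm_le_one (mem_univ l) (hoff _ _ hπl hlk) fun j _ ↦ hM _ _

theorem norm_prod_diag_sub_le_norm_det [NormedCommRing R] (M : Matrix ι ι R) {b : ℝ}
    (hb : 0 ≤ b) (hπ : ∀ π : Perm ι, π ≠ 1 → ‖∏ j, M (π j) j‖ ≤ b) :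
    ‖∏ j, M j j‖ - (Fintype.card ι).factorial * b ≤ ‖M.det‖ := by
  set rest := ∑ π ∈ univ.erase (1 : Perm ι), Perm.sign π • ∏ j, M (π j) j
  have hdet : M.det = ∏ j, M j j + rest := by
    rw [det_apply, ← add_sum_erase _ _ (mem_univ 1), Perm.sign_one, one_smul]
    simp only [Perm.one_apply]
    rfl
  have hrest : ‖rest‖ ≤ (Fintype.card ι).factorial * b :=
    calc ‖rest‖ ≤ ∑ π ∈ univ.erase (1 : Perm ι), ‖Perm.sign π • ∏ j, M (π j) j‖ :=
          norm_sum_le _ _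
      _ ≤ ∑ _π ∈ univ.erase (1 : Perm ι), b := by
          refine sum_le_sum fun π hπ1 ↦ ?_
          rw [norm_units_zsmul]
          exact hπ π (ne_of_mem_erase hπ1)
      _ = #(univ.erase (1 : Perm ι)) * b := by rw [sum_const, nsmul_eq_mul]
      _ ≤ (Fintype.card ι).factorial * b := by
          gcongr
          rw [← Fintype.card_perm]
          exact_mod_cast card_le_univ _
  have htri : ‖∏ j, M j j‖ ≤ ‖M.det‖ + ‖rest‖ := by
    simpa [hdet] using norm_sub_le M.det rest
  linarith

end Matrix

theorem stmt1_general {Ω : Type*} [MeasurableSpace Ω] (μ : Measure Ω) (N : ℕ)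
    (a b : ℝ) (hb : 0 < b) (ha1 : a ≤ 1) (hb1 : b ≤ 1)
    (σ : Fin N → Set Ω)
    (hdisj : Pairwise fun n k => Disjoint (σ n) (σ k))
    (hfull : μ (⋃ n, σ n)ᶜ = 0)
    (κ : Fin N → Fin N → Ω → ℂ)
    (hdiag : ∀ n ζ, (ζ ∈ σ n → ‖κ n n ζ‖ = 1) ∧
      (ζ ∉ σ n → ‖κ n n ζ‖ = a))
    (hoff : ∀ n k ζ, n ≠ k → ((ζ ∈ σ k → ‖κ n k ζ‖ = 1) ∧
      (ζ ∉ σ k → ‖κ n k ζ‖ = b))) :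
    (∀ᵐ ζ ∂μ, ∀ π : Equiv.Perm (Fin N), (∃ j, π j ≠ j) →
        ‖∏ j, κ (π j) j ζ‖ ≤ b) ∧
    ((∀ᵐ ζ ∂μ, ‖∏ n, κ n n ζ‖ = a ^ (N - 1)) →
      ∀ᵐ ζ ∂μ, a ^ (N - 1) - (N.factorial : ℝ) * b ≤
        ‖Matrix.det (Matrix.of fun n k => κ n k ζ)‖) := by
  have hle_one : ∀ n k ζ, ‖κ n k ζ‖ ≤ 1 := by
    intro n k ζ
    rcases eq_or_ne n k with rfl | hnk
    · by_cases h : ζ ∈ σ n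
      · exact ((hdiag n ζ).1 h).le
      · exact ((hdiag n ζ).2 h).trans_le ha1
    · by_cases h : ζ ∈ σ k
      · exact ((hoff n k ζ hnk).1 h).le
      · exact ((hoff n k ζ hnk).2 h).trans_le hb1
  have hperm : ∀ᵐ ζ ∂μ, ∀ π : Perm (Fin N), π ≠ 1 → ‖∏ j, κ (π j) j ζ‖ ≤ b := by
    filter_upwards [mem_ae_iff.mpr hfull] with ζ hζ π hπ
    obtain ⟨k, hk⟩ := mem_iUnion.mp hζ
    refine (Matrix.of fun n k ↦ κ n k ζ).norm_prod_perm_le_of_norm_offDiag_le k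
      (hle_one · · ζ) (fun n l hnl hlk ↦ ?_) hπ
    exact ((hoff n l ζ hnl).2 fun hl ↦ disjoint_left.mp (hdisj hlk) hl hk).le
  refine ⟨hperm.mono fun ζ hζ π ⟨j, hj⟩ ↦ hζ π fun h ↦ hj (by simp [h]), fun hdiag_ae ↦ ?_⟩
  filter_upwards [hperm, hdiag_ae] with ζ hζ hprod
  simpa [hprod] using (Matrix.of fun n k ↦ κ n k ζ).norm_prod_diag_sub_le_norm_det hb.le hζ

theorem stmt1 {Ω : Type*} [MeasurableSpace Ω] (μ : Measure Ω) (N : ℕ) (hN : 2 ≤ N)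
    (a b : ℝ) (ha : 0 < a) (hb : 0 < b) (ha1 : a ≤ 1) (hb1 : b ≤ 1)
    (σ : Fin N → Set Ω) (hmeas : ∀ n, MeasurableSet (σ n))
    (hdisj : Pairwise fun n k => Disjoint (σ n) (σ k))
    (hfull : μ (⋃ n, σ n)ᶜ = 0)
    (κ : Fin N → Fin N → Ω → ℂ)
    (hdiag : ∀ n ζ, (ζ ∈ σ n → ‖κ n n ζ‖ = 1) ∧
      (ζ ∉ σ n → ‖κ n n ζ‖ = a))
    (hoff : ∀ n k ζ, n ≠ k → ((ζ ∈ σ k → ‖κ n k ζ‖ = 1) ∧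
      (ζ ∉ σ k → ‖κ n k ζ‖ = b))) :
    (∀ᵐ ζ ∂μ, ∀ π : Equiv.Perm (Fin N), (∃ j, π j ≠ j) →
        ‖∏ j, κ (π j) j ζ‖ ≤ b) ∧
    ((∀ᵐ ζ ∂μ, ‖∏ n, κ n n ζ‖ = a ^ (N - 1)) →
      ∀ᵐ ζ ∂μ, a ^ (N - 1) - (N.factorial : ℝ) * b ≤
        ‖Matrix.det (Matrix.of fun n k => κ n k ζ)‖) :=
  stmt1_general μ N a b hb ha1 hb1 σ hdisj hfull κ hdiag hoff
end

section
/- Let Θ be the 2×2 matrix function on 𝔻 defined by Θ = [ (c·ϑ₂/2)·((1−z)ϑ₁ − (1+z)ϑ₁(0))/z , (c/2)·((1+z)ϑ₁ − (1−z)ϑ₁(0))/z ; (c̄·ϑ₂/2)·(1+z + (1−z)ϑ₁·conj(ϑ₁(0))) , (c̄/2)·(1−z + (1+z)ϑ₁·conj(ϑ₁(0))) ], where ϑ₁, ϑ₂ are inner functions (|ϑ_i| = 1 a.e. on 𝕋), and c ∈ ℂ satisfies |c|² = 1/(1 + |ϑ₁(0)|²). Then Θ(ζ)*Θ(ζ)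 = I (the 2×2 identity) for almost every ζ ∈ 𝕋, and det Θ = −ϑ₁ϑ₂. -/
/-!
`Θ` factors as
`diag(c/(2z), c̄/2) · [[1, -a], [ā, 1]] · diag(ϑ₁, 1) · [[1-z, 1+z], [1+z, 1-z]] · diag(ϑ₂, 1)`
with `a = ϑ₁(0)`. On `𝕋`, where `ϑ₁`, `ϑ₂`, `z` are unimodular, each factor `M` satisfies
`Mᴴ M = r • 1` with `r = |c|²/4, 1 + |a|², 1, 4, 1` respectively, and the product of these scalars
is `1` by the choice of `|c|`. The determinant splits along the same factorization.
-/

open Matrix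

namespace Matrix

variable {n R : Type*} [Fintype n] [DecidableEq n] [CommRing R] [StarRing R]

theorem conjTranspose_mul_self_mul_eq_smul_one {A B : Matrix n n R} {α β : R}
    (hA : Aᴴ * A = α • 1) (hB : Bᴴ * B = β • 1) :
    (A * B)ᴴ * (A * B) = (α * β) • 1 := by
  rw [conjTranspose_mul, Matrix.mul_assoc, ← Matrix.mul_assoc Aᴴ, hA, Matrix.smul_mul,
    Matrix.one_mul, Matrix.mul_smul, hB, smul_smul]

theorem conjTranspose_diagonal_mul_self_eq_smul_one {d : n → R} {r : R}
    (hd : ∀ i, star (d i) * d i = r) : (diagonal d)ᴴ * diagonal d = r • 1 := by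
  rw [diagonal_conjTranspose, diagonal_mul_diagonal]
  ext i j
  by_cases h : i = j <;> simp [h, hd]

theorem conjTranspose_mul_self_quaternionic (α β : R) :
    !![α, -star β; β, star α]ᴴ * !![α, -star β; β, star α] = (star α * α + star β * β) • 1 := by
  ext i j
  fin_cases i <;> fin_cases j <;> simp [conjTranspose_apply, mul_apply, Fin.sum_univ_two] <;> ring

theorem conjTranspose_mul_self_one_sub_one_add {z : R} (hz : star z * z = 1) :
    !![1 - z, 1 + z; 1 + z, 1 - z]ᴴ * !![1 - z, 1 + z; 1 + z, 1 - z] = (4 : R) • 1 := by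
  ext i j
  fin_cases i <;> fin_cases j <;>
    simp only [Fin.zero_eta, Fin.mk_one, Fin.isValue, mul_apply, conjTranspose_apply, of_apply,
      cons_val', cons_val_zero, cons_val_one, cons_val_fin_one, Fin.sum_univ_two, star_add, star_sub,
      star_one, smul_apply, smul_eq_mul, one_apply_eq, ne_eq, zero_ne_one, one_ne_zero,
      not_false_eq_true, one_apply_ne, mul_one, mul_zero]
  · linear_combination 2 * hz
  · linear_combination -2 * hz
  · linear_combination -2 * hz
  · linear_combination 2 * hz

end Matrix

section Theta

variable {K : Type*} [Field K] [StarRing K]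

/-- `Θ(z)` with `a = ϑ₁(0)`, `t = ϑ₁(z)`, `s = ϑ₂(z)`. -/
def thetaMatrix (c a t s z : K) : Matrix (Fin 2) (Fin 2) K :=
  !![c * s / 2 * (((1 - z) * t - (1 + z) * a) / z), c / 2 * (((1 + z) * t - (1 - z) * a) / z);
     star c * s / 2 * (1 + z + (1 - z) * t * star a), star c / 2 * (1 - z + (1 + z) * t * star a)]

theorem thetaMatrix_eq_mul (c a t s z : K) :
    thetaMatrix c a t s z =
      diagonal ![c / (2 * z), star c / 2] * !![1, -a; star a, 1] * diagonal ![t, 1] *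
        !![1 - z, 1 + z; 1 + z, 1 - z] * diagonal ![s, 1] := by
  ext i j
  fin_cases i <;> fin_cases j <;> simp [thetaMatrix, mul_apply, Fin.sum_univ_two] <;> ring

theorem conjTranspose_mul_self_thetaMatrix [NeZero (2 : K)] (c a : K) {t s z : K}
    (ht : star t * t = 1) (hs : star s * s = 1) (hz : star z * z = 1) :
    (thetaMatrix c a t s z)ᴴ * thetaMatrix c a t s z = (star c * c * (1 + star a * a)) • 1 := by
  have hD : (diagonal ![c / (2 * z), star c / 2])ᴴ * diagonal ![c / (2 * z), star c / 2] =
      (star (c / 2) * (c / 2)) • 1 := by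
    refine conjTranspose_diagonal_mul_self_eq_smul_one fun i => ?_
    fin_cases i
    · calc star (c / (2 * z)) * (c / (2 * z)) = star (c / 2) * (c / 2) / (star z * z) := by
            simp only [star_div₀, star_mul', star_ofNat]; ring
        _ = star (c / 2) * (c / 2) := by rw [hz, div_one]
    · simp only [Fin.mk_one, cons_val_one, cons_val_zero, star_div₀, star_star]
      ring
  have hA : !![1, -a; star a, 1]ᴴ * !![1, -a; star a, 1] = (1 + star a * a) • 1 := by
    simpa [mul_comm] using conjTranspose_mul_self_quaternionic (1 : K) (star a)
  have hT {u : K} (hu : star u * u = 1) : (diagonal ![u, 1])ᴴ * diagonal ![u, 1] = (1 : K) • 1 :=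
    conjTranspose_diagonal_mul_self_eq_smul_one fun i => by fin_cases i <;> simp [hu]
  rw [thetaMatrix_eq_mul, conjTranspose_mul_self_mul_eq_smul_one (conjTranspose_mul_self_mul_eq_smul_one
    (conjTranspose_mul_self_mul_eq_smul_one (conjTranspose_mul_self_mul_eq_smul_one hD hA)
      (hT ht)) (conjTranspose_mul_self_one_sub_one_add hz)) (hT hs)]
  congr 1
  simp only [star_div₀, star_ofNat]
  field_simp
  ring

theorem det_thetaMatrix [NeZero (2 : K)] (c a t s : K) {z : K} (hz : z ≠ 0) :
    (thetaMatrix c a t s z).det = -(star c * c * (1 + star a * a)) * (t * s) := by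
  rw [thetaMatrix_eq_mul]
  simp only [det_mul, det_diagonal, Fin.prod_univ_two, det_fin_two_of, cons_val_zero, cons_val_one,
    cons_val_fin_one]
  field_simp
  ring

end Theta

theorem star_mul_self_eq_one_of_norm_eq_one {𝕜 : Type*} [RCLike 𝕜] {u : 𝕜} (hu : ‖u‖ = 1) :
    star u * u = 1 := by
  rw [← starRingEnd_apply, RCLike.conj_mul, hu]
  simp

theorem star_mul_self_mul_one_add_eq_one {c a : ℂ} (hc : ‖c‖ ^ 2 = 1 / (1 + ‖a‖ ^ 2)) :
    star c * c * (1 + star a * a) = 1 := by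
  rw [← starRingEnd_apply, ← starRingEnd_apply, Complex.conj_mul', Complex.conj_mul']
  norm_cast
  rw [hc]
  field_simp

theorem stmt13 (ϑ₁ ϑ₂ : ℂ → ℂ) (c : ℂ)
    (hc : ‖c‖ ^ 2 = 1 / (1 + ‖ϑ₁ 0‖ ^ 2))
    (Θ : ℂ → Matrix (Fin 2) (Fin 2) ℂ)
    (hΘ : ∀ z : ℂ, Θ z =
      !![c * ϑ₂ z / 2 * (((1 - z) * ϑ₁ z - (1 + z) * ϑ₁ 0) / z),
         c / 2 * (((1 + z) * ϑ₁ z - (1 - z) * ϑ₁ 0) / z);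
         (starRingEnd ℂ) c * ϑ₂ z / 2 * (1 + z + (1 - z) * ϑ₁ z * (starRingEnd ℂ) (ϑ₁ 0)),
         (starRingEnd ℂ) c / 2 * (1 - z + (1 + z) * ϑ₁ z * (starRingEnd ℂ) (ϑ₁ 0))]) :
    (∀ ζ : ℂ, ‖ζ‖ = 1 → ‖ϑ₁ ζ‖ = 1 → ‖ϑ₂ ζ‖ = 1 →
        (Θ ζ)ᴴ * Θ ζ = 1) ∧
    ∀ z : ℂ, z ≠ 0 → (Θ z).det = -(ϑ₁ z * ϑ₂ z) := by
  have hΘ' (z : ℂ) : Θ z = thetaMatrix c (ϑ₁ 0) (ϑ₁ z) (ϑ₂ z) z := hΘ z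
  have hscale := star_mul_self_mul_one_add_eq_one hc
  refine ⟨fun ζ hζ h₁ h₂ => ?_, fun z hz => ?_⟩
  · rw [hΘ', conjTranspose_mul_self_thetaMatrix _ _ (star_mul_self_eq_one_of_norm_eq_one h₁)
      (star_mul_self_eq_one_of_norm_eq_one h₂) (star_mul_self_eq_one_of_norm_eq_one hζ),
      hscale, one_smul]
  · rw [hΘ', det_thetaMatrix _ _ _ _ hz, hscale, neg_one_mul]
end

section
/- Let T be a bounded operator on a Hilbert space H with 2×2 block upper-triangular form T = [T₁, A; 0, T₂] relative to H = H₁ ⊕ H₂. Let K₂ be a Hilbert space, S₂ a bounded operator on K₂, and Y₂ : K₂ → H₂ a surjective bounded operator with Y₂S₂ = T₂Y₂. Suppose there exists a bounded operator Z : K₂ → H₁ satisfying ZS₂ − T₁Z = A·Y₂. Then the operator Y : H₁ ⊕ K₂ → H defined blockwise by Y = [I, Z; 0, Y₂] satisfies Y·(T₁ ⊕ S₂) = T·Y, and Y is surjective. -/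
section BlockUpperTriangular

variable {R M : Type*} [Ring R] [AddCommGroup M] [Module R M]

theorem Submodule.surjective_add_add_of_codisjoint {N : Type*} {p q : Submodule R M}
    (hpq : Codisjoint p q) (Z : N → p) (Y : N → q) (hY : Function.Surjective Y) :
    Function.Surjective (fun a : p × N => (a.1 : M) + Z a.2 + Y a.2) := by
  intro v
  obtain ⟨x, y, rfl⟩ := Submodule.mem_sup'.mp (codisjoint_iff.mp hpq ▸ Submodule.mem_top (x := v))
  obtain ⟨k, rfl⟩ := hY y
  exact ⟨(x - Z k, k), by simp⟩

/-- In block form relative to `M = p ⊕ q`, `hT₁` and `hT₂` say `T = [T₁, A; 0, T₂]`, and the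
conclusion is `[I, Z; 0, Y] (T₁ ⊕ S) = T [I, Z; 0, Y]`. -/
theorem Submodule.map_add_add_eq_of_blockUpperTriangular {N : Type*} [AddCommGroup N] [Module R N]
    {p q : Submodule R M}
    (T : M →ₗ[R] M) (T₁ : p →ₗ[R] p) (T₂ : q →ₗ[R] q) (A : q →ₗ[R] p)
    (hT₁ : ∀ x : p, (T₁ x : M) = T x) (hT₂ : ∀ y : q, T y = (A y : M) + (T₂ y : M))
    (S : N →ₗ[R] N) (Y : N →ₗ[R] q) (hY : ∀ h, Y (S h) = T₂ (Y h))
    (Z : N →ₗ[R] p) (hZ : ∀ h, Z (S h) - T₁ (Z h) = A (Y h)) (x : p) (h : N) :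
    (T₁ x : M) + Z (S h) + Y (S h) = T (x + Z h + Y h) := by
  have hZS : Z (S h) = T₁ (Z h) + A (Y h) := eq_add_of_sub_eq' (hZ h)
  calc (T₁ x : M) + Z (S h) + Y (S h) = T₁ x + T₁ (Z h) + ((A (Y h) : M) + T₂ (Y h)) := by
        rw [hZS, hY]; push_cast; abel
    _ = T (x + Z h + Y h) := by rw [map_add, map_add, hT₁, hT₁, hT₂]

end BlockUpperTriangular

theorem stmt15_general {H K₂ : Type*} [NormedAddCommGroup H] [InnerProductSpace ℂ H]
    [NormedAddCommGroup K₂] [InnerProductSpace ℂ K₂]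
    (H₁ : Submodule ℂ H) [Submodule.HasOrthogonalProjection H₁]
    (T : H →L[ℂ] H) (T₁ : H₁ →L[ℂ] H₁) (T₂ : H₁ᗮ →L[ℂ] H₁ᗮ) (A : H₁ᗮ →L[ℂ] H₁)
    (hT1 : ∀ x : H₁, (T₁ x : H) = T x)
    (hT2 : ∀ y : H₁ᗮ, T y = (A y : H) + (T₂ y : H))
    (S₂ : K₂ →L[ℂ] K₂) (Y₂ : K₂ →L[ℂ] H₁ᗮ) (hY₂surj : Function.Surjective Y₂)
    (hintw : ∀ h : K₂, Y₂ (S₂ h) = T₂ (Y₂ h))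
    (Z : K₂ →L[ℂ] H₁) (hZ : ∀ h : K₂, Z (S₂ h) - T₁ (Z h) = A (Y₂ h)) :
    (∀ (x : H₁) (h : K₂),
        ((T₁ x : H) + (Z (S₂ h) : H) + (Y₂ (S₂ h) : H)) =
          T ((x : H) + (Z h : H) + (Y₂ h : H))) ∧
    Function.Surjective (fun p : H₁ × K₂ => (p.1 : H) + (Z p.2 : H) + (Y₂ p.2 : H)) :=
  ⟨Submodule.map_add_add_eq_of_blockUpperTriangular (T : H →ₗ[ℂ] H) (T₁ : H₁ →ₗ[ℂ] H₁)
      (T₂ : H₁ᗮ →ₗ[ℂ] H₁ᗮ) A hT1 hT2 (S₂ : K₂ →ₗ[ℂ] K₂) (Y₂ : K₂ →ₗ[ℂ] H₁ᗮ) hintw Z hZ,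
    Submodule.surjective_add_add_of_codisjoint H₁.isCompl_orthogonal.codisjoint Z Y₂ hY₂surj⟩

theorem stmt15 {H K₂ : Type*} [NormedAddCommGroup H] [InnerProductSpace ℂ H] [CompleteSpace H]
    [NormedAddCommGroup K₂] [InnerProductSpace ℂ K₂]
    (H₁ : Submodule ℂ H) [Submodule.HasOrthogonalProjection H₁]
    (T : H →L[ℂ] H) (T₁ : H₁ →L[ℂ] H₁) (T₂ : H₁ᗮ →L[ℂ] H₁ᗮ) (A : H₁ᗮ →L[ℂ] H₁)
    (hT1 : ∀ x : H₁, (T₁ x : H) = T x)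
    (hT2 : ∀ y : H₁ᗮ, T y = (A y : H) + (T₂ y : H))
    (S₂ : K₂ →L[ℂ] K₂) (Y₂ : K₂ →L[ℂ] H₁ᗮ) (hY₂surj : Function.Surjective Y₂)
    (hintw : ∀ h : K₂, Y₂ (S₂ h) = T₂ (Y₂ h))
    (Z : K₂ →L[ℂ] H₁) (hZ : ∀ h : K₂, Z (S₂ h) - T₁ (Z h) = A (Y₂ h)) :
    (∀ (x : H₁) (h : K₂),
        ((T₁ x : H) + (Z (S₂ h) : H) + (Y₂ (S₂ h) : H)) =
          T ((x : H) + (Z h : H) + (Y₂ h : H))) ∧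
    Function.Surjective (fun p : H₁ × K₂ => (p.1 : H) + (Z p.2 : H) + (Y₂ p.2 : H)) :=
  stmt15_general H₁ T T₁ T₂ A hT1 hT2 S₂ Y₂ hY₂surj hintw Z hZ
end

section
/- Let a₁, a₂ > 0 and let α_a(z) = exp(a(z+1)/(z−1)). Suppose θ ∈ H^∞ has the form θ(z) = (c̄/2)·(1 − z + (1+z)·α_{a₁}(z)·conj(α_{a₁}(0))) for some constant c ≠ 0. Then θ is not divisible in H^∞ by α_{a₀} for any a₀ > 0; that is, for every a₀ > 0 there is no g ∈ H^∞ with θ = α_{a₀}·g. -/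
/-! On the radius `0 < r < 1` every `α_a(r) = exp (-a (1 + r) / (1 - r))` is a positive real,
so `|θ(r)| ≥ |c| (1 - r) / 2`. A factorisation `θ = α_{a₀} g` therefore forces
`|g(r)| ≥ |c| (1 - r) exp (a₀ (1 + r) / (1 - r)) / 2`, which tends to `∞` as `r → 1⁻`,
contradicting the boundedness of `g`. -/

open Metric Filter Topology Set ComplexConjugate

noncomputable def singularInner (a : ℝ) (z : ℂ) : ℂ := Complex.exp (a * ((z + 1) / (z - 1)))

lemma singularInner_ofReal (a r : ℝ) :
    singularInner a r = Real.exp (a * ((r + 1) / (r - 1))) := by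
  simp [singularInner]

lemma singularInner_zero (a : ℝ) : singularInner a 0 = Real.exp (-a) := by
  simpa using singularInner_ofReal a 0

lemma tendsto_inv_one_sub_nhdsLT_one : Tendsto (fun r : ℝ => (1 - r)⁻¹) (𝓝[<] 1) atTop := by
  refine Tendsto.inv_tendsto_nhdsGT_zero (tendsto_nhdsWithin_iff.mpr ⟨?_, ?_⟩)
  · have h : Tendsto (fun r : ℝ => 1 - r) (𝓝 1) (𝓝 (1 - 1)) := tendsto_const_nhds.sub tendsto_id
    simpa using h.mono_left nhdsWithin_le_nhds
  · filter_upwards [self_mem_nhdsWithin] with r (hr : r < 1) using sub_pos.mpr hr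

lemma tendsto_one_sub_div_exp_mobius {a : ℝ} (ha : 0 < a) :
    Tendsto (fun r : ℝ => (1 - r) / Real.exp (a * ((r + 1) / (r - 1)))) (𝓝[<] 1) atTop := by
  have h := ((tendsto_exp_mul_div_rpow_atTop 1 (2 * a) (by positivity)).comp
    tendsto_inv_one_sub_nhdsLT_one).atTop_mul_const (Real.exp_pos (-a))
  refine h.congr' ?_
  filter_upwards [self_mem_nhdsWithin] with r (hr : r < 1)
  have h₁ : 1 - r ≠ 0 := (sub_pos.mpr hr).ne'
  have h₂ : r - 1 ≠ 0 := sub_ne_zero.mpr hr.ne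
  have hexp : -(a * ((r + 1) / (r - 1))) = 2 * a * (1 - r)⁻¹ + -a := by
    field_simp
    ring
  simp only [Function.comp_apply, Real.rpow_one]
  rw [div_eq_mul_inv (1 - r), ← Real.exp_neg, hexp, Real.exp_add]
  field_simp

noncomputable def theta (a : ℝ) (c z : ℂ) : ℂ :=
  conj c / 2 * (1 - z + (1 + z) * singularInner a z * conj (singularInner a 0))

lemma mul_one_sub_le_norm_theta_ofReal (a : ℝ) (c : ℂ) {r : ℝ} (hr : r ∈ Icc (-1) 1) :
    ‖c‖ / 2 * (1 - r) ≤ ‖theta a c r‖ := by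
  have hreal : (1 - r + (1 + r) * singularInner a r * conj (singularInner a 0) : ℂ) =
      ((1 - r + (1 + r) * (Real.exp (a * ((r + 1) / (r - 1))) * Real.exp (-a)) : ℝ) : ℂ) := by
    rw [singularInner_ofReal, singularInner_zero, Complex.conj_ofReal]
    push_cast
    ring
  rw [theta, hreal, norm_mul, norm_div, Complex.norm_conj, Complex.norm_two, Complex.norm_real]
  gcongr
  refine le_trans ?_ (le_abs_self _)
  have : 0 ≤ (1 + r) * (Real.exp (a * ((r + 1) / (r - 1))) * Real.exp (-a)) :=
    mul_nonneg (by linarith [hr.1]) (by positivity)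
  linarith

theorem stmt19_general (a₁ : ℝ) (c : ℂ) (hc : c ≠ 0)
    (θ : ℂ → ℂ)
    (hθ : ∀ z : ℂ, θ z = (starRingEnd ℂ) c / 2 *
        (1 - z + (1 + z) * Complex.exp ((a₁ : ℂ) * ((z + 1) / (z - 1))) *
          (starRingEnd ℂ) (Complex.exp ((a₁ : ℂ) * ((0 + 1) / (0 - 1)))))) :
    ∀ a₀ : ℝ, 0 < a₀ →
      ¬ ∃ g : ℂ → ℂ, DifferentiableOn ℂ g (ball 0 1) ∧
          (∃ C : ℝ, ∀ z ∈ ball (0 : ℂ) 1, ‖g z‖ ≤ C) ∧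
          ∀ z ∈ ball (0 : ℂ) 1, θ z = Complex.exp ((a₀ : ℂ) * ((z + 1) / (z - 1))) * g z := by
  rintro a₀ ha₀ ⟨g, -, ⟨C, hC⟩, hg⟩
  have hθα : ∀ z, θ z = theta a₁ c z := hθ
  have hmem : ∀ r ∈ Ioo (0 : ℝ) 1, (r : ℂ) ∈ ball (0 : ℂ) 1 := fun r hr => by
    simpa [abs_of_pos hr.1] using hr.2
  have hlower : ∀ r ∈ Ioo (0 : ℝ) 1,
      ‖c‖ / 2 * ((1 - r) / Real.exp (a₀ * ((r + 1) / (r - 1)))) ≤ ‖g r‖ := by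
    intro r hr
    have hdiv : θ r = singularInner a₀ r * g r := hg r (hmem r hr)
    have hθr := mul_one_sub_le_norm_theta_ofReal a₁ c (r := r) ⟨by linarith [hr.1], hr.2.le⟩
    rw [← hθα, hdiv, norm_mul, singularInner_ofReal, Complex.norm_real,
      Real.norm_of_nonneg (Real.exp_pos _).le] at hθr
    rw [← mul_div_assoc, div_le_iff₀' (Real.exp_pos _)]
    exact hθr
  have hunbounded := (tendsto_one_sub_div_exp_mobius ha₀).const_mul_atTop
    (div_pos (norm_pos_iff.mpr hc) two_pos)
  obtain ⟨r, hCr, hr⟩ := ((hunbounded.eventually_gt_atTop C).and (Ioo_mem_nhdsLT one_pos)).exists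
  linarith [hC r (hmem r hr), hlower r hr]

theorem stmt19 (a₁ : ℝ) (ha₁ : 0 < a₁) (c : ℂ) (hc : c ≠ 0)
    (θ : ℂ → ℂ)
    (hθ : ∀ z : ℂ, θ z = (starRingEnd ℂ) c / 2 *
        (1 - z + (1 + z) * Complex.exp ((a₁ : ℂ) * ((z + 1) / (z - 1))) *
          (starRingEnd ℂ) (Complex.exp ((a₁ : ℂ) * ((0 + 1) / (0 - 1)))))) :
    ∀ a₀ : ℝ, 0 < a₀ →
      ¬ ∃ g : ℂ → ℂ, DifferentiableOn ℂ g (ball 0 1) ∧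
          (∃ C : ℝ, ∀ z ∈ ball (0 : ℂ) 1, ‖g z‖ ≤ C) ∧
          ∀ z ∈ ball (0 : ℂ) 1, θ z = Complex.exp ((a₀ : ℂ) * ((z + 1) / (z - 1))) * g z :=
  stmt19_general a₁ c hc θ hθ
end
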